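/- arXiv:2511.20014 — 7 statements merged into one kernel-verified Lean document; each statement's English description precedes it below -/
import Mathlib

section
/- The 8×8 Hermitian matrix Ĉ (with entries Ĉ indexed by the computational basis of (ℂ²)^⊗3: diagonal entries 1/3 at positions (1,1),(3,3),(4,4),(5,5),(6,6),(8,8), zeros at (2,2),(7,7), and off-diagonal entries 1/2 at positions (1,4),(1,6),(3,5),(3,8),(4,6),(5,8) and their transposes, all other entries zero) satisfies (U_φ ⊗ U_φ ⊗ conj(U_φ)) Ĉ (U_φ ⊗ U_φ ⊗ conj(U_φ))† = Ĉ for every φ ∈ ℝ, where U_φ = |0⟩⟨0| + e^{iφ}|1⟩⟨1|. -/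
open Matrix Complex Kronecker

noncomputable section

noncomputable def Chat8 : Matrix (Fin 8) (Fin 8) ℂ :=
  !![1/3, 0, 0, 1/2, 0, 1/2, 0, 0;
     0, 0, 0, 0, 0, 0, 0, 0;
     0, 0, 1/3, 0, 1/2, 0, 0, 1/2;
     1/2, 0, 0, 1/3, 0, 1/2, 0, 0;
     0, 0, 1/2, 0, 1/3, 0, 0, 1/2;
     1/2, 0, 0, 1/2, 0, 1/3, 0, 0;
     0, 0, 0, 0, 0, 0, 0, 0;
     0, 0, 1/2, 0, 1/2, 0, 0, 1/3]

/-- Encoding of a bit triple `((a,b),c)` as an index in `Fin 8` (`c` = input bit). -/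
def enc : (Fin 2 × Fin 2) × Fin 2 → Fin 8 :=
  fun p => ⟨4 * p.1.1.val + 2 * p.1.2.val + p.2.val,
    by have := p.1.1.isLt; have := p.1.2.isLt; have := p.2.isLt; omega⟩

/-- The Choi operator `Ĉ`, viewed as an operator on `ℂ² ⊗ ℂ² ⊗ ℂ²`. -/
noncomputable def ChatT : Matrix ((Fin 2 × Fin 2) × Fin 2) ((Fin 2 × Fin 2) × Fin 2) ℂ :=
  Matrix.of fun i j => Chat8 (enc i) (enc j)

/-- The phase unitary `U_φ = |0⟩⟨0| + e^{iφ}|1⟩⟨1|`. -/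
noncomputable def U (φ : ℝ) : Matrix (Fin 2) (Fin 2) ℂ :=
  !![1, 0; 0, Complex.exp (φ * Complex.I)]

/-!
`U_φ ⊗ U_φ ⊗ conj(U_φ)` is diagonal with entry `e^{iφ(a + b - c)}` at the basis vector `|a b c⟩`,
so conjugating by it multiplies the `(i, j)` entry by `e^{iφ(q(i) - q(j))}`, where `q = a + b - c`.
Every nonzero entry of `Ĉ` joins two basis vectors with the same `q`, hence is left unchanged.
-/

namespace Matrix

variable {ι : Type*} [Fintype ι] [DecidableEq ι]

theorem diagonal_mul_mul_conjTranspose_diagonal {R : Type*} [CommSemiring R] [StarRing R]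
    (d : ι → R) (A : Matrix ι ι R) :
    diagonal d * A * (diagonal d)ᴴ = of fun i j => d i * A i j * star (d j) := by
  ext i j
  simp [diagonal_conjTranspose, mul_diagonal, diagonal_mul]

theorem diagonal_mul_mul_conjTranspose_diagonal_eq_self {R : Type*} [CommSemiring R] [StarRing R]
    {d : ι → R} {A : Matrix ι ι R} (h : ∀ i j, A i j ≠ 0 → d i * star (d j) = 1) :
    diagonal d * A * (diagonal d)ᴴ = A := by
  rw [diagonal_mul_mul_conjTranspose_diagonal]
  ext i j
  by_cases hA : A i j = 0
  · simp [hA]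
  · rw [of_apply, mul_right_comm, h i j hA, one_mul]

theorem diagonal_exp_mul_mul_conjTranspose_eq_self (q : ι → ℤ) (φ : ℝ) {A : Matrix ι ι ℂ}
    (hA : ∀ i j, q i ≠ q j → A i j = 0) :
    diagonal (fun i => exp (q i * φ * I)) * A * (diagonal fun i => exp (q i * φ * I))ᴴ = A := by
  refine diagonal_mul_mul_conjTranspose_diagonal_eq_self fun i j hij => ?_
  have hq : q i = q j := not_not.1 (mt (hA i j) hij)
  rw [← hq, star_def, ← Complex.exp_conj, ← Complex.exp_add]
  simp

end Matrix

def charge (p : (Fin 2 × Fin 2) × Fin 2) : ℤ := p.1.1.val + p.1.2.val - p.2.val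

theorem U_eq_diagonal (φ : ℝ) : U φ = diagonal fun k : Fin 2 => exp ((k.val : ℤ) * φ * I) := by
  ext i j
  fin_cases i <;> fin_cases j <;> simp [U]

theorem U_kronecker_U_kronecker_conj_eq_diagonal (φ : ℝ) :
    (U φ ⊗ₖ U φ) ⊗ₖ (U φ).map star = diagonal fun p => exp (charge p * φ * I) := by
  rw [U_eq_diagonal, diagonal_map (star_zero ℂ), diagonal_kronecker_diagonal,
    diagonal_kronecker_diagonal]
  congr 1
  funext p
  simp only [star_def, ← exp_conj, ← exp_add, charge]
  congr 1
  simp only [Int.cast_natCast, map_mul, map_natCast, conj_ofReal, conj_I, Int.cast_sub,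
    Int.cast_add]
  ring

theorem ChatT_eq_zero_of_charge_ne (i j : (Fin 2 × Fin 2) × Fin 2) (h : charge i ≠ charge j) :
    ChatT i j = 0 := by
  obtain ⟨⟨a, b⟩, c⟩ := i
  obtain ⟨⟨a', b'⟩, c'⟩ := j
  fin_cases a <;> fin_cases b <;> fin_cases c <;> fin_cases a' <;> fin_cases b' <;> fin_cases c' <;>
    simp_all [charge, ChatT, Chat8, enc]

/-- `Ĉ` is invariant under conjugation by `U_φ ⊗ U_φ ⊗ conj(U_φ)` for every phase `φ`. -/
theorem phase_covariance_of_Chat (φ : ℝ) :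
    ((U φ ⊗ₖ U φ) ⊗ₖ (U φ).map star) * ChatT *
      ((U φ ⊗ₖ U φ) ⊗ₖ (U φ).map star)ᴴ = ChatT := by
  rw [U_kronecker_U_kronecker_conj_eq_diagonal]
  exact diagonal_exp_mul_mul_conjTranspose_eq_self charge φ ChatT_eq_zero_of_charge_ne

end
end

section
/- The matrix Ĉ admits the decomposition Ĉ = (4/3)·C⁺ − (1/3)·C⁻, where C⁺ is the 8×8 matrix with all entries equal to 1/3 on the 3×3 blocks spanned by {|000⟩,|011⟩,|101⟩} and by {|010⟩,|100⟩,|111⟩} (and zero elsewhere), and C⁻ is the 8×8 matrix with diagonal entries 1/3 on those same six basis vectors and off-diagonal entries −1/6 within each of the two 3×3 blocks (and zero elsewhere). Moreover C⁺ and C⁻ are both positive semidefinite. -/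
open Matrix Complex ComplexOrder

set_option maxHeartbeats 8000000


namespace MyAux
variable {m : ℕ} {α : Type*}

@[simp] lemma cons_val_five (x : α) (u : Fin (m+5) → α) :
    Matrix.vecCons x u 5 =
      Matrix.vecHead (Matrix.vecTail (Matrix.vecTail (Matrix.vecTail (Matrix.vecTail u)))) :=
  rfl

@[simp] lemma cons_val_six (x : α) (u : Fin (m+6) → α) :
    Matrix.vecCons x u 6 =
      Matrix.vecHead (Matrix.vecTail (Matrix.vecTail (Matrix.vecTail (Matrix.vecTail
        (Matrix.vecTail u))))) :=
  rfl

@[simp] lemma cons_val_seven (x : α) (u : Fin (m+7) → α) :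
    Matrix.vecCons x u 7 =
      Matrix.vecHead (Matrix.vecTail (Matrix.vecTail (Matrix.vecTail (Matrix.vecTail
        (Matrix.vecTail (Matrix.vecTail u)))))) :=
  rfl

end MyAux

noncomputable section

noncomputable def Cp8 : Matrix (Fin 8) (Fin 8) ℂ :=
  !![1/3, 0, 0, 1/3, 0, 1/3, 0, 0;
     0, 0, 0, 0, 0, 0, 0, 0;
     0, 0, 1/3, 0, 1/3, 0, 0, 1/3;
     1/3, 0, 0, 1/3, 0, 1/3, 0, 0;
     0, 0, 1/3, 0, 1/3, 0, 0, 1/3;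
     1/3, 0, 0, 1/3, 0, 1/3, 0, 0;
     0, 0, 0, 0, 0, 0, 0, 0;
     0, 0, 1/3, 0, 1/3, 0, 0, 1/3]

noncomputable def Cm8 : Matrix (Fin 8) (Fin 8) ℂ :=
  !![1/3, 0, 0, -1/6, 0, -1/6, 0, 0;
     0, 0, 0, 0, 0, 0, 0, 0;
     0, 0, 1/3, 0, -1/6, 0, 0, -1/6;
     -1/6, 0, 0, 1/3, 0, -1/6, 0, 0;
     0, 0, -1/6, 0, 1/3, 0, 0, -1/6;
     -1/6, 0, 0, -1/6, 0, 1/3, 0, 0;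
     0, 0, 0, 0, 0, 0, 0, 0;
     0, 0, -1/6, 0, -1/6, 0, 0, 1/3]

/-- `Ĉ = (4/3)·C⁺ − (1/3)·C⁻` with `C⁺, C⁻` positive semidefinite. -/
theorem Chat_decomposition :
    Chat8 = (4/3 : ℂ) • Cp8 - (1/3 : ℂ) • Cm8 ∧ Cp8.PosSemidef ∧ Cm8.PosSemidef := by
  refine ⟨?_, posSemidef_iff_dotProduct_mulVec.mpr ⟨?_, ?_⟩, posSemidef_iff_dotProduct_mulVec.mpr ⟨?_, ?_⟩⟩
  · ext i j
    fin_cases i <;> fin_cases j <;>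
      simp [Chat8, Cp8, Cm8, Matrix.smul_apply, Matrix.sub_apply, Matrix.vecHead, Matrix.vecTail] <;> norm_num
  · ext i j
    fin_cases i <;> fin_cases j <;> simp [Cp8, Matrix.conjTranspose_apply, Matrix.vecHead, Matrix.vecTail] <;> norm_num
  · intro x
    have h : star x ⬝ᵥ Cp8 *ᵥ x =
        (1/3 : ℂ) * (star (x 0 + x 3 + x 5) * (x 0 + x 3 + x 5)
          + star (x 2 + x 4 + x 7) * (x 2 + x 4 + x 7)) := by
      simp [Cp8, Matrix.mulVec, dotProduct, Fin.sum_univ_eight, Matrix.vecHead, Matrix.vecTail]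
      ring
    rw [h]
    have h13 : (0:ℂ) ≤ (1/3 : ℂ) := by
      rw [show (1/3:ℂ) = ((1/3:ℝ):ℂ) by norm_num, Complex.zero_le_real]; norm_num
    exact mul_nonneg h13 (add_nonneg (star_mul_self_nonneg _) (star_mul_self_nonneg _))
  · ext i j
    fin_cases i <;> fin_cases j <;> simp [Cm8, Matrix.conjTranspose_apply, Matrix.vecHead, Matrix.vecTail] <;> norm_num
  · intro x
    have h : star x ⬝ᵥ Cm8 *ᵥ x =
        (1/6 : ℂ) * (star (x 0 - x 3) * (x 0 - x 3)
          + star (x 0 - x 5) * (x 0 - x 5)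
          + star (x 3 - x 5) * (x 3 - x 5)
          + star (x 2 - x 4) * (x 2 - x 4)
          + star (x 2 - x 7) * (x 2 - x 7)
          + star (x 4 - x 7) * (x 4 - x 7)) := by
      simp [Cm8, Matrix.mulVec, dotProduct, Fin.sum_univ_eight, Matrix.vecHead, Matrix.vecTail]
      ring
    rw [h]
    have h16 : (0:ℂ) ≤ (1/6 : ℂ) := by
      rw [show (1/6:ℂ) = ((1/6:ℝ):ℂ) by norm_num, Complex.zero_le_real]; norm_num
    refine mul_nonneg h16 ?_
    repeat' apply add_nonneg
    all_goals exact star_mul_self_nonneg _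

end
end

section
/- The trace norm (sum of absolute values of eigenvalues) of the matrix Ĉ equals 10/3. -/
open Matrix Complex

noncomputable section

noncomputable def Chat8sq : Matrix (Fin 8) (Fin 8) ℂ :=
  !![11/18, 0, 0, 7/12, 0, 7/12, 0, 0;
     0, 0, 0, 0, 0, 0, 0, 0;
     0, 0, 11/18, 0, 7/12, 0, 0, 7/12;
     7/12, 0, 0, 11/18, 0, 7/12, 0, 0;
     0, 0, 7/12, 0, 11/18, 0, 0, 7/12;
     7/12, 0, 0, 7/12, 0, 11/18, 0, 0;
     0, 0, 0, 0, 0, 0, 0, 0;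
     0, 0, 7/12, 0, 7/12, 0, 0, 11/18]


lemma cons_val_five' {α : Type*} {m : ℕ} (x : α) (u : Fin (m+5) → α) :
    Matrix.vecCons x u 5 = Matrix.vecHead (Matrix.vecTail (Matrix.vecTail (Matrix.vecTail (Matrix.vecTail u)))) :=
  rfl

lemma cons_val_six' {α : Type*} {m : ℕ} (x : α) (u : Fin (m+6) → α) :
    Matrix.vecCons x u 6 = Matrix.vecHead (Matrix.vecTail (Matrix.vecTail (Matrix.vecTail (Matrix.vecTail (Matrix.vecTail u))))) :=
  rfl

lemma cons_val_seven' {α : Type*} {m : ℕ} (x : α) (u : Fin (m+7) → α) :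
    Matrix.vecCons x u 7 = Matrix.vecHead (Matrix.vecTail (Matrix.vecTail (Matrix.vecTail (Matrix.vecTail (Matrix.vecTail (Matrix.vecTail u)))))) :=
  rfl

set_option maxHeartbeats 1600000 in
lemma Chat8_sq : Chat8 * Chat8 = Chat8sq := by
  ext i j
  fin_cases i <;> fin_cases j <;>
      simp [Chat8, Chat8sq, Matrix.mul_apply, Fin.sum_univ_eight, cons_val_five', cons_val_six', cons_val_seven', Matrix.vecHead, Matrix.vecTail, Function.comp] <;> norm_num

set_option maxHeartbeats 1600000 in
lemma Chat8_cube : Chat8 * Chat8sq = (7/6 : ℂ) • Chat8sq + (2/9 : ℂ) • Chat8 := by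
  ext i j
  fin_cases i <;> fin_cases j <;>
      simp [Chat8, Chat8sq, Matrix.mul_apply, Fin.sum_univ_eight, cons_val_five', cons_val_six', cons_val_seven', Matrix.vecHead, Matrix.vecTail, Function.comp] <;> norm_num

set_option maxHeartbeats 1600000 in
/-- The trace norm of `Ĉ` (sum of absolute values of its eigenvalues) equals `10/3`. -/
theorem traceNorm_Chat (h : Chat8.IsHermitian) :
    ∑ i, |h.eigenvalues i| = 10/3 := by
  classical
  set U : Matrix (Fin 8) (Fin 8) ℂ := (h.eigenvectorUnitary : Matrix (Fin 8) (Fin 8) ℂ) with hUdef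
  set d : Fin 8 → ℂ := fun i => ((h.eigenvalues i : ℝ) : ℂ) with hddef
  have hU1 : star U * U = 1 := Unitary.coe_star_mul_self h.eigenvectorUnitary
  have hUU : U * star U = 1 := Unitary.coe_mul_star_self h.eigenvectorUnitary
  have key2 : ∀ X : Matrix (Fin 8) (Fin 8) ℂ, U * (star U * X) = X := by
    intro X; rw [← Matrix.mul_assoc, hUU, Matrix.one_mul]
  have hd1 : star U * Chat8 * U = diagonal d := by
    have := h.conjStarAlgAut_star_eigenvectorUnitary
    simp only [Unitary.conjStarAlgAut_star_apply] at this
    exact this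
  have hd2 : star U * Chat8sq * U = diagonal d * diagonal d := by
    rw [← Chat8_sq, ← hd1]
    simp only [Matrix.mul_assoc, key2]
  have hd3 : star U * (Chat8 * Chat8sq) * U = diagonal d * (diagonal d * diagonal d) := by
    conv_rhs => rw [← hd2, ← hd1]
    simp only [Matrix.mul_assoc, key2]
  have hDiagEq : diagonal d * (diagonal d * diagonal d)
      = (7/6 : ℂ) • (diagonal d * diagonal d) + (2/9 : ℂ) • diagonal d := by
    rw [← hd3, Chat8_cube, ← hd2, ← hd1]
    simp only [Matrix.mul_add, Matrix.add_mul, Matrix.mul_smul, Matrix.smul_mul]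
  have hval : ∀ i, h.eigenvalues i = 0 ∨ h.eigenvalues i = 4/3 ∨ h.eigenvalues i = -1/6 := by
    intro i
    have hi := congrFun (congrFun hDiagEq i) i
    simp only [Matrix.diagonal_mul_diagonal, Matrix.add_apply, Matrix.smul_apply,
      Matrix.diagonal_apply_eq, Pi.mul_apply, smul_eq_mul] at hi
    simp only [hddef] at hi
    rw [show (7/6:ℂ) = ((7/6:ℝ):ℂ) by norm_num, show (2/9:ℂ) = ((2/9:ℝ):ℂ) by norm_num] at hi
    have hiR : h.eigenvalues i * (h.eigenvalues i * h.eigenvalues i)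
        = 7/6 * (h.eigenvalues i * h.eigenvalues i) + 2/9 * h.eigenvalues i := by
      exact_mod_cast hi
    set x := h.eigenvalues i
    have hfac : x * (x - 4/3) * (x + 1/6) = 0 := by nlinarith [hiR]
    rcases mul_eq_zero.mp hfac with h1 | h2
    · rcases mul_eq_zero.mp h1 with h3 | h4
      · exact Or.inl h3
      · exact Or.inr (Or.inl (by linarith))
    · exact Or.inr (Or.inr (by linarith))
  -- traces
  have trU : ∀ M : Matrix (Fin 8) (Fin 8) ℂ, (star U * M * U).trace = M.trace := by
    intro M
    rw [Matrix.trace_mul_cycle, hUU, Matrix.one_mul]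
  have tr1 : ∑ i, h.eigenvalues i = 2 := by
    have h1 : Chat8.trace = ∑ i, d i := by
      rw [← trU Chat8, hd1, Matrix.trace_diagonal]
    have h2 : Chat8.trace = 2 := by
      norm_num [Chat8, Matrix.trace, Matrix.diag, Fin.sum_univ_succ, cons_val_five',
        cons_val_six', cons_val_seven', Matrix.vecHead, Matrix.vecTail]
    rw [h2] at h1
    simp only [hddef] at h1
    exact_mod_cast h1.symm
  have tr2 : ∑ i, h.eigenvalues i * h.eigenvalues i = 11/3 := by
    have h1 : Chat8sq.trace = ∑ i, d i * d i := by
      rw [← trU Chat8sq, hd2, Matrix.diagonal_mul_diagonal, Matrix.trace_diagonal]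
    have h2 : Chat8sq.trace = 11/3 := by
      norm_num [Chat8sq, Matrix.trace, Matrix.diag, Fin.sum_univ_succ, cons_val_five',
        cons_val_six', cons_val_seven', Matrix.vecHead, Matrix.vecTail]
    rw [h2, show (11/3:ℂ) = ((11/3:ℝ):ℂ) by norm_num] at h1
    simp only [hddef] at h1
    exact_mod_cast h1.symm
  -- final combination
  have habs : ∀ i, |h.eigenvalues i|
      = 4/3 * (h.eigenvalues i * h.eigenvalues i) - 7/9 * h.eigenvalues i := by
    intro i
    rcases hval i with h0 | h0 | h0 <;> rw [h0] <;> norm_num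
  calc ∑ i, |h.eigenvalues i|
      = ∑ i, (4/3 * (h.eigenvalues i * h.eigenvalues i) - 7/9 * h.eigenvalues i) :=
        Finset.sum_congr rfl fun i _ => habs i
    _ = 4/3 * (∑ i, h.eigenvalues i * h.eigenvalues i) - 7/9 * (∑ i, h.eigenvalues i) := by
        rw [Finset.sum_sub_distrib, ← Finset.mul_sum, ← Finset.mul_sum]
    _ = 10/3 := by rw [tr1, tr2]; norm_num

end
end

section
/- Let B̂: M₂(ℂ) → M₄(ℂ) be the linear map with Choi operator Ĉ, defined by B̂(ρ) = Tr₃[(1₄ ⊗ ρᵀ) Ĉ]. Then for every equatorial qubit state ρ = (1/2)(1 + r cos φ σ_x + r sin φ σ_y) with 0 ≤ r ≤ 1, both partial traces of B̂(ρ) reproduce ρ: Tr₁ B̂(ρ) = Tr₂ B̂(ρ) = ρ. -/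
open Matrix Complex

noncomputable section

def idx (m : Fin 4) (k : Fin 2) : Fin 8 :=
  ⟨2 * m.val + k.val, by have := m.isLt; have := k.isLt; omega⟩

noncomputable def ptrace12 (C : Matrix (Fin 8) (Fin 8) ℂ) : Matrix (Fin 2) (Fin 2) ℂ :=
  Matrix.of fun k l => ∑ m : Fin 4, C (idx m k) (idx m l)

def pr (a b : Fin 2) : Fin 4 :=
  ⟨2 * a.val + b.val, by have := a.isLt; have := b.isLt; omega⟩

/-- The map with Choi operator `C` (third tensor factor = input):
`B(ρ) = Tr₃[(1 ⊗ ρᵀ) C]`, in components. -/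
noncomputable def Bof (C : Matrix (Fin 8) (Fin 8) ℂ) (ρ : Matrix (Fin 2) (Fin 2) ℂ) :
    Matrix (Fin 4) (Fin 4) ℂ :=
  Matrix.of fun m n => ∑ k : Fin 2, ∑ k' : Fin 2, ρ k' k * C (idx m k') (idx n k)

/-- Partial trace over the first output qubit. -/
noncomputable def tr1 (M : Matrix (Fin 4) (Fin 4) ℂ) : Matrix (Fin 2) (Fin 2) ℂ :=
  Matrix.of fun b b' => ∑ a : Fin 2, M (pr a b) (pr a b')

/-- Partial trace over the second output qubit. -/
noncomputable def tr2 (M : Matrix (Fin 4) (Fin 4) ℂ) : Matrix (Fin 2) (Fin 2) ℂ :=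
  Matrix.of fun a a' => ∑ b : Fin 2, M (pr a b) (pr a' b)

def sx : Matrix (Fin 2) (Fin 2) ℂ := !![0, 1; 1, 0]
def sy : Matrix (Fin 2) (Fin 2) ℂ := !![0, -Complex.I; Complex.I, 0]

/-- The equatorial qubit state `(1/2)(1 + r cos φ σ_x + r sin φ σ_y)`. -/
noncomputable def eqstate (r φ : ℝ) : Matrix (Fin 2) (Fin 2) ℂ :=
  (1/2 : ℂ) • ((1 : Matrix (Fin 2) (Fin 2) ℂ)
    + ((r * Real.cos φ : ℝ) : ℂ) • sx + ((r * Real.sin φ : ℝ) : ℂ) • sy)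

/-! Both marginals of `B̂` transmit the coherences of `ρ` unchanged and contract its population
imbalance `ρ₀₀ - ρ₁₁` by the factor `1/3`, i.e. they act as `ρ ↦ ρ + ((ρ₁₁ - ρ₀₀)/3) σ_z`.
Equatorial states have equal populations, so both marginals fix them. -/

def sz : Matrix (Fin 2) (Fin 2) ℂ := !![1, 0; 0, -1]

theorem tr1_Bof_Chat8 (ρ : Matrix (Fin 2) (Fin 2) ℂ) :
    tr1 (Bof Chat8 ρ) = ρ + ((ρ 1 1 - ρ 0 0) / 3) • sz := by
  ext i j
  fin_cases i <;> fin_cases j <;>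
    simp [tr1, Bof, Fin.sum_univ_succ, pr, idx, Chat8, sz] <;> ring

theorem tr2_Bof_Chat8 (ρ : Matrix (Fin 2) (Fin 2) ℂ) :
    tr2 (Bof Chat8 ρ) = ρ + ((ρ 1 1 - ρ 0 0) / 3) • sz := by
  ext i j
  fin_cases i <;> fin_cases j <;>
    simp [tr2, Bof, Fin.sum_univ_succ, pr, idx, Chat8, sz] <;> ring

theorem eqstate_one_one (r φ : ℝ) : eqstate r φ 1 1 = eqstate r φ 0 0 := by
  simp [eqstate, sx, sy]

theorem Chat_broadcasts_equatorial_general (r φ : ℝ) :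
    tr1 (Bof Chat8 (eqstate r φ)) = eqstate r φ ∧
    tr2 (Bof Chat8 (eqstate r φ)) = eqstate r φ := by
  have balanced : eqstate r φ 1 1 - eqstate r φ 0 0 = 0 := sub_eq_zero.2 (eqstate_one_one r φ)
  simp [tr1_Bof_Chat8, tr2_Bof_Chat8, balanced]

/-- For every equatorial state `ρ`, both partial traces of `B̂(ρ)` reproduce `ρ`. -/
theorem Chat_broadcasts_equatorial (r φ : ℝ) (hr0 : 0 ≤ r) (hr1 : r ≤ 1) :
    tr1 (Bof Chat8 (eqstate r φ)) = eqstate r φ ∧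
    tr2 (Bof Chat8 (eqstate r φ)) = eqstate r φ :=
  Chat_broadcasts_equatorial_general r φ

end
end

section
/- Let C be the 8×8 Hermitian Choi operator of a map satisfying phase covariance, flip covariance, and permutation invariance, parametrized by c₁, c₄ ∈ ℝ, c₂, c₃, c₅, c₆ ∈ ℂ as in the general block form of the paper, and additionally satisfying the classical-consistency constraints c₃ = 1 − c₂, c₅ = c₄ − 1/2, c₆ = 2 − c₁ − 4c₄. Then the partial trace of C over the first two qubit factors equals the identity, i.e., the corresponding map is trace-preserving everywhere. -/
open Matrix Complex

noncomputable section

/-- The general Choi operator (Eq. (12)) of a map satisfying phase covariance,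
flip covariance and permutation invariance. -/
noncomputable def Cgen (c1 c2 c3 c4 c5 c6 : ℂ) : Matrix (Fin 8) (Fin 8) ℂ :=
  !![c1, 0, 0, c2, 0, c2, 0, 0;
     0, c6, 0, 0, 0, 0, 0, 0;
     0, 0, c4+c5, 0, c4-c5, 0, 0, c3;
     c3, 0, 0, c4+c5, 0, c4-c5, 0, 0;
     0, 0, c4-c5, 0, c4+c5, 0, 0, c3;
     c3, 0, 0, c4-c5, 0, c4+c5, 0, 0;
     0, 0, 0, 0, 0, 0, c6, 0;
     0, 0, c2, 0, c2, 0, 0, c1]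

-- `Tr₁₂` only sees the four diagonal `2 × 2` blocks of `Cgen`; `c₂` and `c₃` lie outside them.
theorem ptrace12_Cgen_eq_smul_one (c1 c2 c3 c4 c5 c6 : ℂ) :
    ptrace12 (Cgen c1 c2 c3 c4 c5 c6) = (c1 + 2 * (c4 + c5) + c6) • (1 : Matrix (Fin 2) (Fin 2) ℂ) := by
  ext k l
  fin_cases k <;> fin_cases l <;> simp [ptrace12, Fin.sum_univ_four, idx, Cgen] <;> ring

theorem ptrace12_Cgen_general (c1 c4 : ℝ) (c2 c3 c5 c6 : ℂ)
    (h5 : c5 = (c4 : ℂ) - 1/2)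
    (h6 : c6 = 2 - (c1 : ℂ) - 4 * (c4 : ℂ)) :
    ptrace12 (Cgen (c1 : ℂ) c2 c3 (c4 : ℂ) c5 c6) = 1 := by
  have hscalar : (c1 : ℂ) + 2 * ((c4 : ℂ) + c5) + c6 = 1 := by
    rw [h5, h6]
    ring
  rw [ptrace12_Cgen_eq_smul_one, hscalar, one_smul]

/-- Under the classical-consistency constraints `c₃ = 1 − c₂`, `c₅ = c₄ − 1/2`,
`c₆ = 2 − c₁ − 4c₄` (with `c₁, c₄ ∈ ℝ`), the map with Choi operator `Cgen` is
trace-preserving everywhere: `Tr₁₂ C = 1₂`. -/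
theorem ptrace12_Cgen (c1 c4 : ℝ) (c2 c3 c5 c6 : ℂ)
    (h3 : c3 = 1 - c2) (h5 : c5 = (c4 : ℂ) - 1/2)
    (h6 : c6 = 2 - (c1 : ℂ) - 4 * (c4 : ℂ)) :
    ptrace12 (Cgen (c1 : ℂ) c2 c3 (c4 : ℂ) c5 c6) = 1 :=
  ptrace12_Cgen_general c1 c4 c2 c3 c5 c6 h5 h6

end
end

section
/- For any real numbers a, b ≥ 0 and any positive semidefinite 8×8 matrices E, F with Tr₁₂E = Tr₁₂F = 1₂ (i.e., Choi operators of CPTP maps), if a·E − b·F = Ĉ, then a + b ≥ 5/3. -/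
open Matrix Complex ComplexOrder

noncomputable section

set_option maxHeartbeats 1000000

lemma quad_re_nonneg {M : Matrix (Fin 8) (Fin 8) ℂ} (hM : M.PosSemidef)
    (v : Fin 8 → ℂ) (z : ℂ) (hz : star v ⬝ᵥ M.mulVec v = z) : 0 ≤ z.re := by
  have h := hM.dotProduct_mulVec_nonneg v
  rw [Complex.le_def] at h
  have h1 := h.1
  rw [hz] at h1
  simpa using h1

/-- Any decomposition `Ĉ = a·E − b·F` into Choi operators of CPTP maps
(`E, F` PSD with `Tr₁₂ = 1₂`) has `a + b ≥ 5/3`. -/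
theorem simulation_cost_lower_bound (a b : ℝ) (ha : 0 ≤ a) (hb : 0 ≤ b)
    (E F : Matrix (Fin 8) (Fin 8) ℂ) (hE : E.PosSemidef) (hF : F.PosSemidef)
    (hEtp : ptrace12 E = 1) (hFtp : ptrace12 F = 1)
    (hdec : (a : ℂ) • E - (b : ℂ) • F = Chat8) :
    5/3 ≤ a + b := by
  have hre : ∀ (i j : Fin 8), a * (E i j).re - b * (F i j).re = (Chat8 i j).re := by
    intro i j
    have h := congrFun (congrFun hdec i) j
    have h2 := congrArg Complex.re h
    simpa [Matrix.sub_apply, Matrix.smul_apply, smul_eq_mul, Complex.sub_re,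
      Complex.mul_re, Complex.ofReal_re, Complex.ofReal_im] using h2
  have h00 : a * (E 0 0).re - b * (F 0 0).re = 1/3 := by
    have h := hre 0 0
    rw [show Chat8 0 0 = 1/3 from rfl] at h
    simpa using h
  have h33 : a * (E 3 3).re - b * (F 3 3).re = 1/3 := by
    have h := hre 3 3
    rw [show Chat8 3 3 = 1/3 from rfl] at h
    simpa using h
  have h55 : a * (E 5 5).re - b * (F 5 5).re = 1/3 := by
    have h := hre 5 5
    rw [show Chat8 5 5 = 1/3 from rfl] at h
    simpa using h
  have h22 : a * (E 2 2).re - b * (F 2 2).re = 1/3 := by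
    have h := hre 2 2
    rw [show Chat8 2 2 = 1/3 from rfl] at h
    simpa using h
  have h44 : a * (E 4 4).re - b * (F 4 4).re = 1/3 := by
    have h := hre 4 4
    rw [show Chat8 4 4 = 1/3 from rfl] at h
    simpa using h
  have h77 : a * (E 7 7).re - b * (F 7 7).re = 1/3 := by
    have h := hre 7 7
    rw [show Chat8 7 7 = 1/3 from rfl] at h
    simpa using h
  have h03 : a * (E 0 3).re - b * (F 0 3).re = 1/2 := by
    have h := hre 0 3
    rw [show Chat8 0 3 = 1/2 from rfl] at h
    simpa using h
  have h30 : a * (E 3 0).re - b * (F 3 0).re = 1/2 := by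
    have h := hre 3 0
    rw [show Chat8 3 0 = 1/2 from rfl] at h
    simpa using h
  have h05 : a * (E 0 5).re - b * (F 0 5).re = 1/2 := by
    have h := hre 0 5
    rw [show Chat8 0 5 = 1/2 from rfl] at h
    simpa using h
  have h50 : a * (E 5 0).re - b * (F 5 0).re = 1/2 := by
    have h := hre 5 0
    rw [show Chat8 5 0 = 1/2 from rfl] at h
    simpa using h
  have h35 : a * (E 3 5).re - b * (F 3 5).re = 1/2 := by
    have h := hre 3 5
    rw [show Chat8 3 5 = 1/2 from rfl] at h
    simpa using h
  have h53 : a * (E 5 3).re - b * (F 5 3).re = 1/2 := by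
    have h := hre 5 3
    rw [show Chat8 5 3 = 1/2 from rfl] at h
    simpa using h
  have h24 : a * (E 2 4).re - b * (F 2 4).re = 1/2 := by
    have h := hre 2 4
    rw [show Chat8 2 4 = 1/2 from rfl] at h
    simpa using h
  have h42 : a * (E 4 2).re - b * (F 4 2).re = 1/2 := by
    have h := hre 4 2
    rw [show Chat8 4 2 = 1/2 from rfl] at h
    simpa using h
  have h27 : a * (E 2 7).re - b * (F 2 7).re = 1/2 := by
    have h := hre 2 7
    rw [show Chat8 2 7 = 1/2 from rfl] at h
    simpa using h
  have h72 : a * (E 7 2).re - b * (F 7 2).re = 1/2 := by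
    have h := hre 7 2
    rw [show Chat8 7 2 = 1/2 from rfl] at h
    simpa using h
  have h47 : a * (E 4 7).re - b * (F 4 7).re = 1/2 := by
    have h := hre 4 7
    rw [show Chat8 4 7 = 1/2 from rfl] at h
    simpa using h
  have h74 : a * (E 7 4).re - b * (F 7 4).re = 1/2 := by
    have h := hre 7 4
    rw [show Chat8 7 4 = 1/2 from rfl] at h
    simpa using h
  have trE0 : (E 0 0).re + (E 2 2).re + (E 4 4).re + (E 6 6).re = 1 := by
    have h := congrFun (congrFun hEtp 0) 0
    rw [show (1 : Matrix (Fin 2) (Fin 2) ℂ) 0 0 = 1 by norm_num [Matrix.one_apply]] at h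
    have h2 : (E 0 0 + E 2 2 + E 4 4 + E 6 6 : ℂ) = 1 := by
      rw [← h]
      simp [ptrace12, Fin.sum_univ_four, Matrix.one_apply,
        show idx 0 0 = 0 from rfl, show idx 1 0 = 2 from rfl,
        show idx 2 0 = 4 from rfl, show idx 3 0 = 6 from rfl]
      try ring
    have h3 := congrArg Complex.re h2
    simpa [Complex.add_re] using h3
  have trE1 : (E 1 1).re + (E 3 3).re + (E 5 5).re + (E 7 7).re = 1 := by
    have h := congrFun (congrFun hEtp 1) 1
    rw [show (1 : Matrix (Fin 2) (Fin 2) ℂ) 1 1 = 1 by norm_num [Matrix.one_apply]] at h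
    have h2 : (E 1 1 + E 3 3 + E 5 5 + E 7 7 : ℂ) = 1 := by
      rw [← h]
      simp [ptrace12, Fin.sum_univ_four, Matrix.one_apply,
        show idx 0 1 = 1 from rfl, show idx 1 1 = 3 from rfl,
        show idx 2 1 = 5 from rfl, show idx 3 1 = 7 from rfl]
      try ring
    have h3 := congrArg Complex.re h2
    simpa [Complex.add_re] using h3
  have trF0 : (F 0 0).re + (F 2 2).re + (F 4 4).re + (F 6 6).re = 1 := by
    have h := congrFun (congrFun hFtp 0) 0
    rw [show (1 : Matrix (Fin 2) (Fin 2) ℂ) 0 0 = 1 by norm_num [Matrix.one_apply]] at h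
    have h2 : (F 0 0 + F 2 2 + F 4 4 + F 6 6 : ℂ) = 1 := by
      rw [← h]
      simp [ptrace12, Fin.sum_univ_four, Matrix.one_apply,
        show idx 0 0 = 0 from rfl, show idx 1 0 = 2 from rfl,
        show idx 2 0 = 4 from rfl, show idx 3 0 = 6 from rfl]
      try ring
    have h3 := congrArg Complex.re h2
    simpa [Complex.add_re] using h3
  have trF1 : (F 1 1).re + (F 3 3).re + (F 5 5).re + (F 7 7).re = 1 := by
    have h := congrFun (congrFun hFtp 1) 1
    rw [show (1 : Matrix (Fin 2) (Fin 2) ℂ) 1 1 = 1 by norm_num [Matrix.one_apply]] at h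
    have h2 : (F 1 1 + F 3 3 + F 5 5 + F 7 7 : ℂ) = 1 := by
      rw [← h]
      simp [ptrace12, Fin.sum_univ_four, Matrix.one_apply,
        show idx 0 1 = 1 from rfl, show idx 1 1 = 3 from rfl,
        show idx 2 1 = 5 from rfl, show idx 3 1 = 7 from rfl]
      try ring
    have h3 := congrArg Complex.re h2
    simpa [Complex.add_re] using h3
  have qE1 : 0 ≤ (E 0 0).re - (E 0 3).re - (E 3 0).re + (E 3 3).re := by
    have hv : star (![1,0,0,-1,0,0,0,0] : Fin 8 → ℂ) ⬝ᵥ E.mulVec ![1,0,0,-1,0,0,0,0] = E 0 0 - E 0 3 - E 3 0 + E 3 3 := by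
      have h5 : (![1,0,0,-1,0,0,0,0] : Fin 8 → ℂ) 5 = 0 := rfl
      have h6 : (![1,0,0,-1,0,0,0,0] : Fin 8 → ℂ) 6 = 0 := rfl
      have h7 : (![1,0,0,-1,0,0,0,0] : Fin 8 → ℂ) 7 = 0 := rfl
      simp [dotProduct, Matrix.mulVec, Fin.sum_univ_eight, h5, h6, h7]
      try ring
    have h := quad_re_nonneg hE ![1,0,0,-1,0,0,0,0] _ hv
    simpa [Complex.add_re, Complex.sub_re] using h
  have qE2 : 0 ≤ (E 3 3).re - (E 3 5).re - (E 5 3).re + (E 5 5).re := by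
    have hv : star (![0,0,0,1,0,-1,0,0] : Fin 8 → ℂ) ⬝ᵥ E.mulVec ![0,0,0,1,0,-1,0,0] = E 3 3 - E 3 5 - E 5 3 + E 5 5 := by
      have h5 : (![0,0,0,1,0,-1,0,0] : Fin 8 → ℂ) 5 = -1 := rfl
      have h6 : (![0,0,0,1,0,-1,0,0] : Fin 8 → ℂ) 6 = 0 := rfl
      have h7 : (![0,0,0,1,0,-1,0,0] : Fin 8 → ℂ) 7 = 0 := rfl
      simp [dotProduct, Matrix.mulVec, Fin.sum_univ_eight, h5, h6, h7]
      try ring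
    have h := quad_re_nonneg hE ![0,0,0,1,0,-1,0,0] _ hv
    simpa [Complex.add_re, Complex.sub_re] using h
  have qE3 : 0 ≤ (E 0 0).re - (E 0 5).re - (E 5 0).re + (E 5 5).re := by
    have hv : star (![1,0,0,0,0,-1,0,0] : Fin 8 → ℂ) ⬝ᵥ E.mulVec ![1,0,0,0,0,-1,0,0] = E 0 0 - E 0 5 - E 5 0 + E 5 5 := by
      have h5 : (![1,0,0,0,0,-1,0,0] : Fin 8 → ℂ) 5 = -1 := rfl
      have h6 : (![1,0,0,0,0,-1,0,0] : Fin 8 → ℂ) 6 = 0 := rfl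
      have h7 : (![1,0,0,0,0,-1,0,0] : Fin 8 → ℂ) 7 = 0 := rfl
      simp [dotProduct, Matrix.mulVec, Fin.sum_univ_eight, h5, h6, h7]
      try ring
    have h := quad_re_nonneg hE ![1,0,0,0,0,-1,0,0] _ hv
    simpa [Complex.add_re, Complex.sub_re] using h
  have qE4 : 0 ≤ (E 2 2).re - (E 2 4).re - (E 4 2).re + (E 4 4).re := by
    have hv : star (![0,0,1,0,-1,0,0,0] : Fin 8 → ℂ) ⬝ᵥ E.mulVec ![0,0,1,0,-1,0,0,0] = E 2 2 - E 2 4 - E 4 2 + E 4 4 := by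
      have h5 : (![0,0,1,0,-1,0,0,0] : Fin 8 → ℂ) 5 = 0 := rfl
      have h6 : (![0,0,1,0,-1,0,0,0] : Fin 8 → ℂ) 6 = 0 := rfl
      have h7 : (![0,0,1,0,-1,0,0,0] : Fin 8 → ℂ) 7 = 0 := rfl
      simp [dotProduct, Matrix.mulVec, Fin.sum_univ_eight, h5, h6, h7]
      try ring
    have h := quad_re_nonneg hE ![0,0,1,0,-1,0,0,0] _ hv
    simpa [Complex.add_re, Complex.sub_re] using h
  have qE5 : 0 ≤ (E 4 4).re - (E 4 7).re - (E 7 4).re + (E 7 7).re := by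
    have hv : star (![0,0,0,0,1,0,0,-1] : Fin 8 → ℂ) ⬝ᵥ E.mulVec ![0,0,0,0,1,0,0,-1] = E 4 4 - E 4 7 - E 7 4 + E 7 7 := by
      have h5 : (![0,0,0,0,1,0,0,-1] : Fin 8 → ℂ) 5 = 0 := rfl
      have h6 : (![0,0,0,0,1,0,0,-1] : Fin 8 → ℂ) 6 = 0 := rfl
      have h7 : (![0,0,0,0,1,0,0,-1] : Fin 8 → ℂ) 7 = -1 := rfl
      simp [dotProduct, Matrix.mulVec, Fin.sum_univ_eight, h5, h6, h7]
      try ring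
    have h := quad_re_nonneg hE ![0,0,0,0,1,0,0,-1] _ hv
    simpa [Complex.add_re, Complex.sub_re] using h
  have qE6 : 0 ≤ (E 2 2).re - (E 2 7).re - (E 7 2).re + (E 7 7).re := by
    have hv : star (![0,0,1,0,0,0,0,-1] : Fin 8 → ℂ) ⬝ᵥ E.mulVec ![0,0,1,0,0,0,0,-1] = E 2 2 - E 2 7 - E 7 2 + E 7 7 := by
      have h5 : (![0,0,1,0,0,0,0,-1] : Fin 8 → ℂ) 5 = 0 := rfl
      have h6 : (![0,0,1,0,0,0,0,-1] : Fin 8 → ℂ) 6 = 0 := rfl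
      have h7 : (![0,0,1,0,0,0,0,-1] : Fin 8 → ℂ) 7 = -1 := rfl
      simp [dotProduct, Matrix.mulVec, Fin.sum_univ_eight, h5, h6, h7]
      try ring
    have h := quad_re_nonneg hE ![0,0,1,0,0,0,0,-1] _ hv
    simpa [Complex.add_re, Complex.sub_re] using h
  have qEe1 : 0 ≤ (E 1 1).re := by
    have hv : star (![0,1,0,0,0,0,0,0] : Fin 8 → ℂ) ⬝ᵥ E.mulVec ![0,1,0,0,0,0,0,0] = E 1 1 := by
      have h5 : (![0,1,0,0,0,0,0,0] : Fin 8 → ℂ) 5 = 0 := rfl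
      have h6 : (![0,1,0,0,0,0,0,0] : Fin 8 → ℂ) 6 = 0 := rfl
      have h7 : (![0,1,0,0,0,0,0,0] : Fin 8 → ℂ) 7 = 0 := rfl
      simp [dotProduct, Matrix.mulVec, Fin.sum_univ_eight, h5, h6, h7]
      try ring
    have h := quad_re_nonneg hE ![0,1,0,0,0,0,0,0] _ hv
    simpa [Complex.add_re, Complex.sub_re] using h
  have qEe6 : 0 ≤ (E 6 6).re := by
    have hv : star (![0,0,0,0,0,0,1,0] : Fin 8 → ℂ) ⬝ᵥ E.mulVec ![0,0,0,0,0,0,1,0] = E 6 6 := by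
      have h5 : (![0,0,0,0,0,0,1,0] : Fin 8 → ℂ) 5 = 0 := rfl
      have h6 : (![0,0,0,0,0,0,1,0] : Fin 8 → ℂ) 6 = 1 := rfl
      have h7 : (![0,0,0,0,0,0,1,0] : Fin 8 → ℂ) 7 = 0 := rfl
      simp [dotProduct, Matrix.mulVec, Fin.sum_univ_eight, h5, h6, h7]
      try ring
    have h := quad_re_nonneg hE ![0,0,0,0,0,0,1,0] _ hv
    simpa [Complex.add_re, Complex.sub_re] using h
  have qFe1 : 0 ≤ (F 1 1).re := by
    have hv : star (![0,1,0,0,0,0,0,0] : Fin 8 → ℂ) ⬝ᵥ F.mulVec ![0,1,0,0,0,0,0,0] = F 1 1 := by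
      have h5 : (![0,1,0,0,0,0,0,0] : Fin 8 → ℂ) 5 = 0 := rfl
      have h6 : (![0,1,0,0,0,0,0,0] : Fin 8 → ℂ) 6 = 0 := rfl
      have h7 : (![0,1,0,0,0,0,0,0] : Fin 8 → ℂ) 7 = 0 := rfl
      simp [dotProduct, Matrix.mulVec, Fin.sum_univ_eight, h5, h6, h7]
      try ring
    have h := quad_re_nonneg hF ![0,1,0,0,0,0,0,0] _ hv
    simpa [Complex.add_re, Complex.sub_re] using h
  have qFe6 : 0 ≤ (F 6 6).re := by
    have hv : star (![0,0,0,0,0,0,1,0] : Fin 8 → ℂ) ⬝ᵥ F.mulVec ![0,0,0,0,0,0,1,0] = F 6 6 := by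
      have h5 : (![0,0,0,0,0,0,1,0] : Fin 8 → ℂ) 5 = 0 := rfl
      have h6 : (![0,0,0,0,0,0,1,0] : Fin 8 → ℂ) 6 = 1 := rfl
      have h7 : (![0,0,0,0,0,0,1,0] : Fin 8 → ℂ) 7 = 0 := rfl
      simp [dotProduct, Matrix.mulVec, Fin.sum_univ_eight, h5, h6, h7]
      try ring
    have h := quad_re_nonneg hF ![0,0,0,0,0,0,1,0] _ hv
    simpa [Complex.add_re, Complex.sub_re] using h
  have qF1 : 0 ≤ (F 0 0).re + (F 0 3).re + (F 0 5).re + (F 3 0).re + (F 3 3).re + (F 3 5).re + (F 5 0).re + (F 5 3).re + (F 5 5).re := by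
    have hv : star (![1,0,0,1,0,1,0,0] : Fin 8 → ℂ) ⬝ᵥ F.mulVec ![1,0,0,1,0,1,0,0] = F 0 0 + F 0 3 + F 0 5 + F 3 0 + F 3 3 + F 3 5 + F 5 0 + F 5 3 + F 5 5 := by
      have h5 : (![1,0,0,1,0,1,0,0] : Fin 8 → ℂ) 5 = 1 := rfl
      have h6 : (![1,0,0,1,0,1,0,0] : Fin 8 → ℂ) 6 = 0 := rfl
      have h7 : (![1,0,0,1,0,1,0,0] : Fin 8 → ℂ) 7 = 0 := rfl
      simp [dotProduct, Matrix.mulVec, Fin.sum_univ_eight, h5, h6, h7]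
      try ring
    have h := quad_re_nonneg hF ![1,0,0,1,0,1,0,0] _ hv
    simpa [Complex.add_re, Complex.sub_re] using h
  have qF2 : 0 ≤ (F 2 2).re + (F 2 4).re + (F 2 7).re + (F 4 2).re + (F 4 4).re + (F 4 7).re + (F 7 2).re + (F 7 4).re + (F 7 7).re := by
    have hv : star (![0,0,1,0,1,0,0,1] : Fin 8 → ℂ) ⬝ᵥ F.mulVec ![0,0,1,0,1,0,0,1] = F 2 2 + F 2 4 + F 2 7 + F 4 2 + F 4 4 + F 4 7 + F 7 2 + F 7 4 + F 7 7 := by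
      have h5 : (![0,0,1,0,1,0,0,1] : Fin 8 → ℂ) 5 = 0 := rfl
      have h6 : (![0,0,1,0,1,0,0,1] : Fin 8 → ℂ) 6 = 0 := rfl
      have h7 : (![0,0,1,0,1,0,0,1] : Fin 8 → ℂ) 7 = 1 := rfl
      simp [dotProduct, Matrix.mulVec, Fin.sum_univ_eight, h5, h6, h7]
      try ring
    have h := quad_re_nonneg hF ![0,0,1,0,1,0,0,1] _ hv
    simpa [Complex.add_re, Complex.sub_re] using h
  have key : a * ((-(1/3)) * ((E 0 0).re + (E 3 3).re + (E 5 5).re + (E 2 2).re + (E 4 4).re + (E 7 7).re) + (2/3) * ((E 0 3).re + (E 3 0).re + (E 0 5).re + (E 5 0).re + (E 3 5).re + (E 5 3).re + (E 2 4).re + (E 4 2).re + (E 2 7).re + (E 7 2).re + (E 4 7).re + (E 7 4).re)) - b * ((-(1/3)) * ((F 0 0).re + (F 3 3).re + (F 5 5).re + (F 2 2).re + (F 4 4).re + (F 7 7).re) + (2/3) * ((F 0 3).re + (F 3 0).re + (F 0 5).re + (F 5 0).re + (F 3 5).re + (F 5 3).re + (F 2 4).re + (F 4 2).re + (F 2 7).re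 + (F 7 2).re + (F 4 7).re + (F 7 4).re)) = 10/3 := by
    linear_combination (-(1/3)) * h00 + (-(1/3)) * h33 + (-(1/3)) * h55 + (-(1/3)) * h22 + (-(1/3)) * h44 + (-(1/3)) * h77 + (2/3) * h03 + (2/3) * h30 + (2/3) * h05 + (2/3) * h50 + (2/3) * h35 + (2/3) * h53 + (2/3) * h24 + (2/3) * h42 + (2/3) * h27 + (2/3) * h72 + (2/3) * h47 + (2/3) * h74
  have hSE : (-(1/3)) * ((E 0 0).re + (E 3 3).re + (E 5 5).re + (E 2 2).re + (E 4 4).re + (E 7 7).re) + (2/3) * ((E 0 3).re + (E 3 0).re + (E 0 5).re + (E 5 0).re + (E 3 5).re + (E 5 3).re + (E 2 4).re + (E 4 2).re + (E 2 7).re + (E 7 2).re + (E 4 7).re + (E 7 4).re) ≤ 2 := by linarith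
  have hSF : -2 ≤ (-(1/3)) * ((F 0 0).re + (F 3 3).re + (F 5 5).re + (F 2 2).re + (F 4 4).re + (F 7 7).re) + (2/3) * ((F 0 3).re + (F 3 0).re + (F 0 5).re + (F 5 0).re + (F 3 5).re + (F 5 3).re + (F 2 4).re + (F 4 2).re + (F 2 7).re + (F 7 2).re + (F 4 7).re + (F 7 4).re) := by linarith
  have t1 := mul_le_mul_of_nonneg_left hSE ha
  have t2 := mul_le_mul_of_nonneg_left hSF hb
  linarith [key, t1, t2]

end
end

section
/- The simulation cost of the optimal virtual phase-covariant broadcasting map equals 5/3: the minimum of a + b over all decompositions Ĉ = aE − bF with a,b ≥ 0 and E, F Choi operators of CPTP maps (PSD with partial trace over output factors equal to identity) is exactly 5/3, attained by a = 4/3, E = C⁺, b = 1/3, F = C⁻. -/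
open Matrix Complex ComplexOrder

namespace Matrix
@[simp] lemma cons_val_five' {m : ℕ} {α : Type*} (x : α) (u : Fin (m+5) → α) :
    vecCons x u 5 = vecHead (vecTail (vecTail (vecTail (vecTail u)))) := rfl
@[simp] lemma cons_val_six' {m : ℕ} {α : Type*} (x : α) (u : Fin (m+6) → α) :
    vecCons x u 6 = vecHead (vecTail (vecTail (vecTail (vecTail (vecTail u))))) := rfl
@[simp] lemma cons_val_seven' {m : ℕ} {α : Type*} (x : α) (u : Fin (m+7) → α) :
    vecCons x u 7 = vecHead (vecTail (vecTail (vecTail (vecTail (vecTail (vecTail u)))))) := rfl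
@[simp] lemma vecHead_const' {m : ℕ} {α : Type*} (c : α) :
    vecHead (fun _ : Fin (m+1) => c) = c := rfl
@[simp] lemma vecTail_const' {m : ℕ} {α : Type*} (c : α) :
    vecTail (fun _ : Fin (m+1) => c) = fun _ : Fin m => c := rfl
end Matrix

noncomputable section

/-- Gram factor for `Cp8`. -/
noncomputable def B8 : Matrix (Fin 8) (Fin 8) ℂ :=
  !![1/3, 0, 0, 1/3, 0, 1/3, 0, 0;
     1/3, 0, 0, 1/3, 0, 1/3, 0, 0;
     1/3, 0, 0, 1/3, 0, 1/3, 0, 0;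
     0, 0, 1/3, 0, 1/3, 0, 0, 1/3;
     0, 0, 1/3, 0, 1/3, 0, 0, 1/3;
     0, 0, 1/3, 0, 1/3, 0, 0, 1/3;
     0, 0, 0, 0, 0, 0, 0, 0;
     0, 0, 0, 0, 0, 0, 0, 0]

/-- Gram factor for `Cm8`. -/
noncomputable def D8 : Matrix (Fin 8) (Fin 8) ℂ :=
  !![1/3, 0, 0, -1/6, 0, -1/6, 0, 0;
     1/3, 0, 0, -1/6, 0, -1/6, 0, 0;
     1/3, 0, 0, -1/6, 0, -1/6, 0, 0;
     0, 0, 0, 1/2, 0, -1/2, 0, 0;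
     0, 0, 1/3, 0, -1/6, 0, 0, -1/6;
     0, 0, 1/3, 0, -1/6, 0, 0, -1/6;
     0, 0, 1/3, 0, -1/6, 0, 0, -1/6;
     0, 0, 0, 0, 1/2, 0, 0, -1/2]

/-- The dual witness ("sign operator" of `Chat8`). -/
noncomputable def U8 : Matrix (Fin 8) (Fin 8) ℂ :=
  !![-1/3, 0, 0, 2/3, 0, 2/3, 0, 0;
     0, 0, 0, 0, 0, 0, 0, 0;
     0, 0, -1/3, 0, 2/3, 0, 0, 2/3;
     2/3, 0, 0, -1/3, 0, 2/3, 0, 0;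
     0, 0, 2/3, 0, -1/3, 0, 0, 2/3;
     2/3, 0, 0, 2/3, 0, -1/3, 0, 0;
     0, 0, 0, 0, 0, 0, 0, 0;
     0, 0, 2/3, 0, 2/3, 0, 0, -1/3]

/-- Gram factor for `1 + U8`. -/
noncomputable def Bp8 : Matrix (Fin 8) (Fin 8) ℂ :=
  !![1/3, 0, 0, 1/3, 0, 1/3, 0, 0;
     1/3, 0, 0, 1/3, 0, 1/3, 0, 0;
     2/3, 0, 0, 2/3, 0, 2/3, 0, 0;
     0, 0, 1/3, 0, 1/3, 0, 0, 1/3;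
     0, 0, 1/3, 0, 1/3, 0, 0, 1/3;
     0, 0, 2/3, 0, 2/3, 0, 0, 2/3;
     0, 1, 0, 0, 0, 0, 0, 0;
     0, 0, 0, 0, 0, 0, 1, 0]

/-- Projection onto coordinates 1 and 6. -/
noncomputable def P16 : Matrix (Fin 8) (Fin 8) ℂ :=
  !![0, 0, 0, 0, 0, 0, 0, 0;
     0, 1, 0, 0, 0, 0, 0, 0;
     0, 0, 0, 0, 0, 0, 0, 0;
     0, 0, 0, 0, 0, 0, 0, 0;
     0, 0, 0, 0, 0, 0, 0, 0;
     0, 0, 0, 0, 0, 0, 0, 0;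
     0, 0, 0, 0, 0, 0, 1, 0;
     0, 0, 0, 0, 0, 0, 0, 0]


@[simp] lemma idx00 : idx 0 0 = (0 : Fin 8) := rfl
@[simp] lemma idx01 : idx 0 1 = (1 : Fin 8) := rfl
@[simp] lemma idx10 : idx 1 0 = (2 : Fin 8) := rfl
@[simp] lemma idx11 : idx 1 1 = (3 : Fin 8) := rfl
@[simp] lemma idx20 : idx 2 0 = (4 : Fin 8) := rfl
@[simp] lemma idx21 : idx 2 1 = (5 : Fin 8) := rfl
@[simp] lemma idx30 : idx 3 0 = (6 : Fin 8) := rfl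
@[simp] lemma idx31 : idx 3 1 = (7 : Fin 8) := rfl

set_option maxHeartbeats 1000000 in
lemma hCp_fact : Cp8 = B8ᴴ * B8 := by
  ext i j
  fin_cases i <;> fin_cases j <;>
    · rw [Matrix.mul_apply, Fin.sum_univ_eight]
      simp [Cp8, B8, Matrix.conjTranspose_apply] <;> norm_num [Cp8, B8, Matrix.conjTranspose_apply]

set_option maxHeartbeats 1000000 in
lemma hCm_fact : Cm8 = D8ᴴ * D8 := by
  ext i j
  fin_cases i <;> fin_cases j <;>
    · rw [Matrix.mul_apply, Fin.sum_univ_eight]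
      simp [Cm8, D8, Matrix.conjTranspose_apply] <;> norm_num [Cm8, D8, Matrix.conjTranspose_apply]

set_option maxHeartbeats 1000000 in
lemma hP16_fact : P16 = P16ᴴ * P16 := by
  ext i j
  fin_cases i <;> fin_cases j <;>
    · rw [Matrix.mul_apply, Fin.sum_univ_eight]
      simp [P16, Matrix.conjTranspose_apply] <;> norm_num [P16, Matrix.conjTranspose_apply]

set_option maxHeartbeats 1000000 in
lemma hOnePlus : (1 : Matrix (Fin 8) (Fin 8) ℂ) + U8 = Bp8ᴴ * Bp8 := by
  ext i j
  fin_cases i <;> fin_cases j <;>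
    · rw [Matrix.add_apply, Matrix.mul_apply, Fin.sum_univ_eight]
      simp [U8, Bp8, Matrix.conjTranspose_apply, Matrix.one_apply] <;> norm_num [U8, Bp8, Matrix.conjTranspose_apply, Matrix.one_apply] <;> decide

set_option maxHeartbeats 1000000 in
lemma hOneMinus : (1 : Matrix (Fin 8) (Fin 8) ℂ) - U8 = (4 : ℂ) • Cm8 + P16 := by
  ext i j
  fin_cases i <;> fin_cases j <;>
    · simp [U8, Cm8, P16, Matrix.one_apply] <;> norm_num [U8, Cm8, P16, Matrix.one_apply] <;> decide

lemma psd_Cp8 : Cp8.PosSemidef := hCp_fact ▸ posSemidef_conjTranspose_mul_self B8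
lemma psd_Cm8 : Cm8.PosSemidef := hCm_fact ▸ posSemidef_conjTranspose_mul_self D8

lemma psd_onePlus : ((1 : Matrix (Fin 8) (Fin 8) ℂ) + U8).PosSemidef :=
  hOnePlus ▸ posSemidef_conjTranspose_mul_self Bp8

lemma psd_fourCm : ((4 : ℂ) • Cm8).PosSemidef := by
  have h : (4 : ℂ) • Cm8 = ((2 : ℂ) • D8)ᴴ * ((2 : ℂ) • D8) := by
    rw [conjTranspose_smul, Matrix.smul_mul, Matrix.mul_smul, smul_smul, ← hCm_fact]
    norm_num
  rw [h]
  exact posSemidef_conjTranspose_mul_self _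

lemma psd_oneMinus : ((1 : Matrix (Fin 8) (Fin 8) ℂ) - U8).PosSemidef := by
  rw [hOneMinus]
  exact psd_fourCm.add (hP16_fact ▸ posSemidef_conjTranspose_mul_self P16)

set_option maxHeartbeats 1000000 in
lemma hTrCU : trace (Chat8 * U8) = 10/3 := by
  have h : ∀ i : Fin 8, (Chat8 * U8).diag i = ![5/9, 0, 5/9, 5/9, 5/9, 5/9, 0, 5/9] i := by
    intro i
    fin_cases i <;>
      · show (Chat8 * U8) _ _ = _
        rw [Matrix.mul_apply, Fin.sum_univ_eight]
        simp [Chat8, U8] <;> norm_num [Chat8, U8]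
  rw [Matrix.trace, Fin.sum_univ_eight, h, h, h, h, h, h, h, h]
  simp <;> norm_num

set_option maxHeartbeats 1000000 in
lemma hPt_p : ptrace12 Cp8 = 1 := by
  ext k l
  fin_cases k <;> fin_cases l <;>
    · show (∑ m : Fin 4, Cp8 (idx m _) (idx m _)) = _
      rw [Fin.sum_univ_four]
      simp [Cp8, Matrix.one_apply] <;> norm_num [Cp8, Matrix.one_apply]

set_option maxHeartbeats 1000000 in
lemma hPt_m : ptrace12 Cm8 = 1 := by
  ext k l
  fin_cases k <;> fin_cases l <;>
    · show (∑ m : Fin 4, Cm8 (idx m _) (idx m _)) = _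
      rw [Fin.sum_univ_four]
      simp [Cm8, Matrix.one_apply] <;> norm_num [Cm8, Matrix.one_apply]

set_option maxHeartbeats 1000000 in
lemma hDecomp : (4/3 : ℂ) • Cp8 - (1/3 : ℂ) • Cm8 = Chat8 := by
  ext i j
  fin_cases i <;> fin_cases j <;>
    · simp [Chat8, Cp8, Cm8] <;> norm_num [Chat8, Cp8, Cm8]

lemma trace_of_ptrace (E : Matrix (Fin 8) (Fin 8) ℂ) (h : ptrace12 E = 1) :
    trace E = 2 := by
  have h00 := congrFun (congrFun h 0) 0
  have h11 := congrFun (congrFun h 1) 1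
  simp only [ptrace12, Matrix.of_apply, Fin.sum_univ_four, Matrix.one_apply_eq,
    Matrix.one_apply, idx00, idx01, idx10, idx11, idx20, idx21, idx30, idx31] at h00 h11
  have g : trace E = E 0 0 + E 1 1 + E 2 2 + E 3 3 + E 4 4 + E 5 5 + E 6 6 + E 7 7 := by
    simp [Matrix.trace, Fin.sum_univ_eight, Matrix.diag]
  rw [g]
  linear_combination h00 + h11

open scoped MatrixOrder in
lemma posSemidef_exists_conjTranspose_mul_self' {A : Matrix (Fin 8) (Fin 8) ℂ}
    (hA : A.PosSemidef) : ∃ X : Matrix (Fin 8) (Fin 8) ℂ, A = Xᴴ * X := by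
  obtain ⟨X, hX, -, hXX⟩ :=
    CFC.exists_sqrt_of_isSelfAdjoint_of_quasispectrumRestricts hA.isHermitian
      (QuasispectrumRestricts.nnreal_of_nonneg hA.nonneg)
  refine ⟨X, ?_⟩
  rw [← hXX]
  exact congrArg (· * X) hX.star_eq.symm

lemma trace_mul_nonneg' {A B : Matrix (Fin 8) (Fin 8) ℂ}
    (hA : A.PosSemidef) (hB : B.PosSemidef) : 0 ≤ trace (A * B) := by
  obtain ⟨X, rfl⟩ := posSemidef_exists_conjTranspose_mul_self' hA
  obtain ⟨Y, rfl⟩ := posSemidef_exists_conjTranspose_mul_self' hB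
  have key : trace (Xᴴ * X * (Yᴴ * Y)) = trace ((Y * Xᴴ)ᴴ * (Y * Xᴴ)) := by
    rw [conjTranspose_mul, conjTranspose_conjTranspose, Matrix.mul_assoc,
      Matrix.trace_mul_comm]
    simp only [Matrix.mul_assoc]
  rw [key]
  set M := Y * Xᴴ
  rw [Matrix.trace]
  refine Finset.sum_nonneg fun i _ => ?_
  rw [Matrix.diag, Matrix.mul_apply]
  refine Finset.sum_nonneg fun k _ => ?_
  simpa [Matrix.conjTranspose_apply] using star_mul_self_nonneg (M k i)

/-- The simulation cost of the optimal virtual phase-covariant broadcasting map is `5/3`: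
the minimum of `a + b` over all decompositions `Ĉ = a·E − b·F` into Choi operators of
CPTP maps is exactly `5/3`, attained by `a = 4/3, E = C⁺, b = 1/3, F = C⁻`. -/
theorem simulation_cost_eq :
    IsLeast {s : ℝ | ∃ (a b : ℝ) (E F : Matrix (Fin 8) (Fin 8) ℂ),
        0 ≤ a ∧ 0 ≤ b ∧ E.PosSemidef ∧ F.PosSemidef ∧
        ptrace12 E = 1 ∧ ptrace12 F = 1 ∧
        (a : ℂ) • E - (b : ℂ) • F = Chat8 ∧ s = a + b} (5/3) ∧
    (4/3 : ℂ) • Cp8 - (1/3 : ℂ) • Cm8 = Chat8 := by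
  refine ⟨⟨⟨4/3, 1/3, Cp8, Cm8, by norm_num, by norm_num, psd_Cp8, psd_Cm8,
      hPt_p, hPt_m, by push_cast; exact hDecomp, by norm_num⟩, ?_⟩, hDecomp⟩
  rintro s ⟨a, b, E, F, ha, hb, hE, hF, hptE, hptF, heq, rfl⟩
  have trE : trace E = 2 := trace_of_ptrace E hptE
  have trF : trace F = 2 := trace_of_ptrace F hptF
  have ht1 : 0 ≤ trace (E * ((1 : Matrix (Fin 8) (Fin 8) ℂ) - U8)) :=
    trace_mul_nonneg' hE psd_oneMinus
  have ht2 : 0 ≤ trace (F * ((1 : Matrix (Fin 8) (Fin 8) ℂ) + U8)) :=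
    trace_mul_nonneg' hF psd_onePlus
  set t1 := trace (E * ((1 : Matrix (Fin 8) (Fin 8) ℂ) - U8)) with ht1d
  set t2 := trace (F * ((1 : Matrix (Fin 8) (Fin 8) ℂ) + U8)) with ht2d
  have hEU : trace (E * U8) = 2 - t1 := by
    rw [ht1d, Matrix.mul_sub, Matrix.mul_one, trace_sub, trE]; ring
  have hFU : trace (F * U8) = t2 - 2 := by
    rw [ht2d, Matrix.mul_add, Matrix.mul_one, trace_add, trF]; ring
  have hkey : (a : ℂ) * (2 - t1) - (b : ℂ) * (t2 - 2) = 10/3 := by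
    rw [← hEU, ← hFU]
    have h2 : trace (((a : ℂ) • E - (b : ℂ) • F) * U8) = trace (Chat8 * U8) := by rw [heq]
    rw [hTrCU] at h2
    rw [Matrix.sub_mul, Matrix.smul_mul, Matrix.smul_mul, trace_sub, trace_smul,
      trace_smul] at h2
    simpa [smul_eq_mul] using h2
  have hsum : (10/3 : ℂ) + ((a : ℂ) * t1 + (b : ℂ) * t2) = ((2*a + 2*b : ℝ) : ℂ) := by
    push_cast
    linear_combination -hkey
  have hnn : (0 : ℂ) ≤ (a : ℂ) * t1 + (b : ℂ) * t2 :=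
    add_nonneg (mul_nonneg (by exact_mod_cast ha) ht1)
      (mul_nonneg (by exact_mod_cast hb) ht2)
  have hle : ((10/3 : ℝ) : ℂ) ≤ ((2*a + 2*b : ℝ) : ℂ) := by
    rw [← hsum]
    calc ((10/3 : ℝ) : ℂ) = (10/3 : ℂ) := by norm_num
    _ ≤ _ := le_add_of_nonneg_right hnn
  have hfin : (10/3 : ℝ) ≤ 2*a + 2*b := Complex.real_le_real.mp hle
  show (5/3 : ℝ) ≤ a + b
  linarith

end
end
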